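/- Let b₁, b₂ be the multiple regression coefficients of Y on (X₁, X₂) with b₁ ≠ 0, c₁₂ the simple regression slope of X₁ on X₂, and a₁*(γ) the slope of the simple regression of Y on X₁ − γX₂ as a function of γ. Then the equation a₁*(γ) = b₁ has exactly the two solutions γ₁ = c₁₂ and γ₂ = −b₂/b₁ (these coincide when b₂ = −b₁c₁₂). -/

import Mathlib

/-!
The first-order conditions of the least-squares fit are the normal equations
`cov(X₁,Y) = b₁ var X₁ + b₂ cov(X₁,X₂)` and `cov(X₂,Y) = b₁ cov(X₁,X₂) + b₂ var X₂`.
Substituting them, the numerator of `a₁*(γ)` minus `b₁` times its denominator factors as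
`(cov(X₁,X₂) - γ var X₂) (b₂ + γ b₁)`, while the denominator is positive by strict Cauchy–Schwarz.
-/

open Finset Filter

/-- Sample mean of a data vector. -/
noncomputable def mean (p : ℕ) (x : Fin p → ℝ) : ℝ := (∑ i, x i) / (p : ℝ)

/-- Sample covariance of two data vectors. -/
noncomputable def cov (p : ℕ) (x y : Fin p → ℝ) : ℝ :=
  (∑ i, (x i - mean p x) * (y i - mean p y)) / (p : ℝ)

/-- Sample variance of a data vector. -/
noncomputable def svar (p : ℕ) (x : Fin p → ℝ) : ℝ := cov p x x

/-- Slope of the simple least-squares regression of `y` on `x`. -/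
noncomputable def regSlope (p : ℕ) (x y : Fin p → ℝ) : ℝ := cov p x y / svar p x

theorem sum_mul_eq_zero_of_forall_sum_sq_le {ι : Type*} (s : Finset ι) (r d : ι → ℝ)
    (hmin : ∀ t : ℝ, ∑ i ∈ s, r i ^ 2 ≤ ∑ i ∈ s, (r i - t * d i) ^ 2) :
    ∑ i ∈ s, r i * d i = 0 := by
  have hexpand : ∀ t : ℝ, ∑ i ∈ s, (r i - t * d i) ^ 2
      = ∑ i ∈ s, r i ^ 2 + (∑ i ∈ s, d i ^ 2) * (t * t) + (-2 * ∑ i ∈ s, r i * d i) * t := by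
    intro t
    simp only [mul_sum, sum_mul, ← sum_add_distrib]
    exact sum_congr rfl fun i _ => by ring
  have hdisc := discrim_le_zero (a := ∑ i ∈ s, d i ^ 2) (b := -2 * ∑ i ∈ s, r i * d i) (c := 0)
    fun t => by linarith [hmin t, hexpand t]
  rw [discrim] at hdisc
  nlinarith [sq_nonneg (∑ i ∈ s, r i * d i)]

section LeastSquares

variable {ι : Type*} [Fintype ι] (Y X1 X2 : ι → ℝ) (b0 b1 b2 : ℝ)

theorem residual_orthogonal_of_isLeastSquares
    (hmin : ∀ t0 t1 t2 : ℝ,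
      ∑ i, (Y i - b0 - b1 * X1 i - b2 * X2 i) ^ 2 ≤ ∑ i, (Y i - t0 - t1 * X1 i - t2 * X2 i) ^ 2) :
    ∑ i, (Y i - b0 - b1 * X1 i - b2 * X2 i) = 0 ∧
      ∑ i, (Y i - b0 - b1 * X1 i - b2 * X2 i) * X1 i = 0 ∧
      ∑ i, (Y i - b0 - b1 * X1 i - b2 * X2 i) * X2 i = 0 := by
  refine ⟨?_, ?_, ?_⟩
  · simpa using sum_mul_eq_zero_of_forall_sum_sq_le univ _ (fun _ => 1) fun t =>
      (hmin (b0 + t) b1 b2).trans_eq (sum_congr rfl fun i _ => by ring)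
  · exact sum_mul_eq_zero_of_forall_sum_sq_le univ _ _ fun t =>
      (hmin b0 (b1 + t) b2).trans_eq (sum_congr rfl fun i _ => by ring)
  · exact sum_mul_eq_zero_of_forall_sum_sq_le univ _ _ fun t =>
      (hmin b0 b1 (b2 + t)).trans_eq (sum_congr rfl fun i _ => by ring)

end LeastSquares

section SampleMoments

variable {p : ℕ}

theorem sum_sub_mean (hp : p ≠ 0) (x : Fin p → ℝ) : ∑ i, (x i - mean p x) = 0 := by
  rw [sum_sub_distrib, sum_const, card_univ, Fintype.card_fin, nsmul_eq_mul, mean,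
    mul_div_cancel₀ _ (Nat.cast_ne_zero.mpr hp), sub_self]

theorem cov_eq_sum_sub_mean_mul (hp : p ≠ 0) (x y : Fin p → ℝ) :
    cov p x y = (∑ i, (x i - mean p x) * y i) / p := by
  have hcenter : ∑ i, (x i - mean p x) * (y i - mean p y)
      = ∑ i, (x i - mean p x) * y i - mean p y * ∑ i, (x i - mean p x) := by
    rw [mul_sum, ← sum_sub_distrib]
    exact sum_congr rfl fun i _ => by ring
  rw [cov, hcenter, sum_sub_mean hp, mul_zero, sub_zero]

theorem cov_comm (x y : Fin p → ℝ) : cov p x y = cov p y x := by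
  simp only [cov, mul_comm]

theorem svar_nonneg (x : Fin p → ℝ) : 0 ≤ svar p x :=
  div_nonneg (sum_nonneg fun _ _ => mul_self_nonneg _) p.cast_nonneg

theorem cov_sq_le_svar_mul_svar (x y : Fin p → ℝ) :
    cov p x y ^ 2 ≤ svar p x * svar p y := by
  simp only [svar, cov, div_pow, div_mul_div_comm, ← pow_two]
  gcongr
  exact sum_mul_sq_le_sq_mul_sq univ _ _

theorem cov_eq_of_residual_orthogonal (hp : p ≠ 0) (x Y X1 X2 : Fin p → ℝ) (b0 b1 b2 : ℝ)
    (h0 : ∑ i, (Y i - b0 - b1 * X1 i - b2 * X2 i) = 0)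
    (hx : ∑ i, (Y i - b0 - b1 * X1 i - b2 * X2 i) * x i = 0) :
    cov p x Y = b1 * cov p x X1 + b2 * cov p x X2 := by
  have hsplit : ∑ i, (x i - mean p x) * Y i
      = b0 * ∑ i, (x i - mean p x) + b1 * ∑ i, (x i - mean p x) * X1 i
        + b2 * ∑ i, (x i - mean p x) * X2 i
        + (∑ i, (Y i - b0 - b1 * X1 i - b2 * X2 i) * x i
          - mean p x * ∑ i, (Y i - b0 - b1 * X1 i - b2 * X2 i)) := by
    simp only [mul_sum, ← sum_add_distrib, ← sum_sub_distrib]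
    exact sum_congr rfl fun i _ => by ring
  simp only [cov_eq_sum_sub_mean_mul hp, hsplit, sum_sub_mean hp, h0, hx]
  ring

end SampleMoments

theorem slope_eq_iff_of_normal_equations {v1 v2 c s1 s2 b1 b2 γ : ℝ}
    (he1 : s1 = b1 * v1 + b2 * c) (he2 : s2 = b1 * c + b2 * v2)
    (hv2 : v2 ≠ 0) (hb1 : b1 ≠ 0) (hD : v1 - 2 * γ * c + γ ^ 2 * v2 ≠ 0) :
    (s1 - γ * s2) / (v1 - 2 * γ * c + γ ^ 2 * v2) = b1 ↔ γ = c / v2 ∨ γ = -(b2 / b1) := by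
  have hfactor : s1 - γ * s2 - b1 * (v1 - 2 * γ * c + γ ^ 2 * v2)
      = (c - γ * v2) * (b2 + γ * b1) := by
    rw [he1, he2]; ring
  rw [div_eq_iff hD, ← sub_eq_zero, hfactor, mul_eq_zero]
  refine or_congr ?_ ?_
  · rw [eq_div_iff hv2, sub_eq_zero, eq_comm]
  · rw [eq_neg_iff_add_eq_zero, add_div' _ _ _ hb1, div_eq_zero_iff, or_iff_left hb1, add_comm]

theorem slope_equation_two_solutions_general
    (p : ℕ) (Y X1 X2 : Fin p → ℝ) (b0 b1 b2 : ℝ)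
    (hBmin : ∀ t0 t1 t2 : ℝ,
      ∑ i, (Y i - b0 - b1 * X1 i - b2 * X2 i)^2 ≤ ∑ i, (Y i - t0 - t1 * X1 i - t2 * X2 i)^2)
    (hv2 : svar p X2 ≠ 0)
    (hr : (cov p X1 X2)^2 ≠ svar p X1 * svar p X2)
    (hb1 : b1 ≠ 0) :
    ∀ γ : ℝ, (cov p X1 Y - γ * cov p X2 Y) / (svar p X1 - 2 * γ * cov p X1 X2 + γ^2 * svar p X2) = b1 ↔
      (γ = regSlope p X2 X1 ∨ γ = -(b2 / b1)) := by
  intro γ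
  have hp : p ≠ 0 := by
    rintro rfl
    exact hv2 (by simp [svar, cov])
  obtain ⟨h0, h1, h2⟩ := residual_orthogonal_of_isLeastSquares Y X1 X2 b0 b1 b2 hBmin
  have he1 := cov_eq_of_residual_orthogonal hp X1 Y X1 X2 b0 b1 b2 h0 h1
  have he2 := cov_eq_of_residual_orthogonal hp X2 Y X1 X2 b0 b1 b2 h0 h2
  rw [cov_comm X2 X1] at he2
  -- strict Cauchy–Schwarz makes the quadratic in `γ` positive definite
  have hcs := lt_of_le_of_ne (cov_sq_le_svar_mul_svar X1 X2) hr
  have hv2pos := lt_of_le_of_ne (svar_nonneg X2) hv2.symm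
  have hD : 0 < svar p X1 - 2 * γ * cov p X1 X2 + γ ^ 2 * svar p X2 := by
    nlinarith [sq_nonneg (svar p X2 * γ - cov p X1 X2)]
  rw [regSlope, cov_comm X2 X1]
  exact slope_eq_iff_of_normal_equations he1 he2 hv2 hb1 hD.ne'

theorem slope_equation_two_solutions
    (p : ℕ) (Y X1 X2 : Fin p → ℝ) (b0 b1 b2 : ℝ)
    (hBmin : ∀ t0 t1 t2 : ℝ,
      ∑ i, (Y i - b0 - b1 * X1 i - b2 * X2 i)^2 ≤ ∑ i, (Y i - t0 - t1 * X1 i - t2 * X2 i)^2)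
    (hBuniq : ∀ t0 t1 t2 : ℝ,
      ∑ i, (Y i - t0 - t1 * X1 i - t2 * X2 i)^2 ≤ ∑ i, (Y i - b0 - b1 * X1 i - b2 * X2 i)^2 →
      t0 = b0 ∧ t1 = b1 ∧ t2 = b2)
    (hv1 : svar p X1 ≠ 0) (hv2 : svar p X2 ≠ 0)
    (hr : (cov p X1 X2)^2 ≠ svar p X1 * svar p X2)
    (hb1 : b1 ≠ 0) :
    ∀ γ : ℝ, (cov p X1 Y - γ * cov p X2 Y) / (svar p X1 - 2 * γ * cov p X1 X2 + γ^2 * svar p X2) = b1 ↔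
      (γ = regSlope p X2 X1 ∨ γ = -(b2 / b1)) :=
  slope_equation_two_solutions_general p Y X1 X2 b0 b1 b2 hBmin hv2 hr hb1
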